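/- Let C be a Griesmer [g_q(k,d),k,d] code over F_q with q not dividing d, write d = d_1 q + d_0 with 1 ≤ d_0 ≤ q−1, let a be a minimum weight codeword and c' a minimum weight codeword of Res(C,a). Then there exist at least d_0 preimages b of c' under the puncturing map with wt(b) = d; in particular at least one such preimage exists. -/

import Mathlib

/-!
The preimages of `c'` under puncturing are the `q` vectors `b + μ • a`, `μ ∈ F`, for one fixed
preimage `b`. Counting coordinate by coordinate, their weights add up to
`q * wt c' + (q - 1) * wt a = q * (d₁ + 1) + (q - 1) * d = q * d + (q - d₀)`.
Each of them is a nonzero codeword, hence has weight at least `d`; so the excesses over `d` add up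
to `q - d₀`, and at least `d₀` of the `q` lifts have weight exactly `d`.
-/

/-- Hamming weight of a vector. -/
noncomputable def wt {ι F : Type*} [Zero F] (c : ι → F) : ℕ :=
  Nat.card {i // c i ≠ 0}

/-- Griesmer sum `g_q(k,d) = ∑_{i<k} ⌈d / q^i⌉` (using `(d + q^i - 1)/q^i`). -/
def gbound (q k d : ℕ) : ℕ :=
  ∑ i ∈ Finset.range k, (d + q ^ i - 1) / q ^ i

open Finset

lemma wt_eq_card_filter {ι F : Type*} [Fintype ι] [Zero F] [DecidableEq F] (c : ι → F) :
    wt c = #{i | c i ≠ 0} := by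
  rw [wt, Nat.card_eq_fintype_card, Fintype.card_subtype]

lemma wt_restrict {ι F : Type*} [Fintype ι] [Zero F] [DecidableEq F] (p : ι → Prop)
    [DecidablePred p] (c : ι → F) :
    wt (fun i : {i // p i} => c i) = #{i | p i ∧ c i ≠ 0} := by
  rw [wt, Nat.card_congr (Equiv.subtypeSubtypeEquivSubtypeInter p (fun i => c i ≠ 0)),
    Nat.card_eq_fintype_card, Fintype.card_subtype]

lemma card_le_card_filter_eq_zero_add_sum {α : Type*} [Fintype α] (f : α → ℕ) :
    Fintype.card α ≤ #{x | f x = 0} + ∑ x, f x := by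
  have hne : #{x | ¬f x = 0} ≤ ∑ x, f x :=
    calc #{x | ¬f x = 0} = ∑ x with ¬f x = 0, 1 := card_eq_sum_ones _
      _ ≤ ∑ x with ¬f x = 0, f x :=
          sum_le_sum fun x hx => Nat.one_le_iff_ne_zero.2 (mem_filter.1 hx).2
      _ ≤ ∑ x, f x := sum_le_sum_of_subset (filter_subset _ _)
  have hsplit := card_filter_add_card_filter_not (s := univ) (fun x => f x = 0)
  rw [card_univ] at hsplit
  omega

lemma card_filter_smul_add_le_natCard {F V : Type*} [Field F] [Fintype F] [AddCommGroup V]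
    [Module F V] [Finite V] {a : V} (ha : a ≠ 0) (b : V) (P : V → Prop) [DecidablePred P] :
    #{μ : F | P (b + μ • a)} ≤ Nat.card {v // P v} := by
  rw [← Fintype.card_subtype, ← Nat.card_eq_fintype_card]
  refine Nat.card_le_card_of_injective (fun μ => ⟨b + μ.1 • a, μ.2⟩) fun μ ν h => ?_
  exact Subtype.ext (smul_left_injective F ha (add_left_cancel (congrArg Subtype.val h)))

section Field

variable {F : Type*} [Field F] [Fintype F]

lemma card_filter_add_mul_ne_zero [DecidableEq F] {x y : F} (hy : y ≠ 0) :
    #{μ | x + μ * y ≠ 0} = Fintype.card F - 1 := by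
  have : ({μ | x + μ * y ≠ 0} : Finset F) = univ.erase (-x / y) := by
    rw [← filter_ne']
    refine filter_congr fun μ _ => not_congr ?_
    rw [eq_div_iff hy]
    constructor <;> intro h <;> linear_combination h
  rw [this, card_erase_of_mem (mem_univ _), card_univ]

lemma sum_wt_add_smul {ι : Type*} [Fintype ι] (a b : ι → F) :
    ∑ μ : F, wt (b + μ • a) =
      Fintype.card F * wt (fun i : {i // a i = 0} => b i) + (Fintype.card F - 1) * wt a := by
  classical
  calc ∑ μ : F, wt (b + μ • a) = ∑ i, #{μ | b i + μ * a i ≠ 0} := by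
        simp only [wt_eq_card_filter, card_filter, Pi.add_apply, Pi.smul_apply, smul_eq_mul]
        exact sum_comm
    _ = ∑ i with a i = 0, #{μ : F | b i ≠ 0} + ∑ i with a i ≠ 0, (Fintype.card F - 1) := by
        rw [← sum_filter_add_sum_filter_not univ (fun i => a i = 0)]
        congr 1
        · refine sum_congr rfl fun i hi => ?_
          simp only [(mem_filter.1 hi).2, mul_zero, add_zero]
        · exact sum_congr rfl fun i hi => card_filter_add_mul_ne_zero (mem_filter.1 hi).2
    _ = _ := by
        rw [wt_restrict, wt_eq_card_filter, sum_const, smul_eq_mul,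
          mul_comm _ (Fintype.card F - 1)]
        simp [filter_const, apply_ite card, sum_ite, filter_filter, mul_comm]

lemma le_card_filter_wt_add_smul_eq {ι : Type*} [Fintype ι] {a b : ι → F} {d d₀ d₁ : ℕ}
    (haw : wt a = d) (hdecomp : d = d₁ * Fintype.card F + d₀)
    (hbw : wt (fun i : {i // a i = 0} => b i) = d₁ + 1)
    (hd_le : ∀ μ : F, d ≤ wt (b + μ • a)) :
    d₀ ≤ #{μ : F | wt (b + μ • a) = d} := by
  set q := Fintype.card F
  have hsum : ∑ μ : F, (wt (b + μ • a) - d) + q * d = q * (d₁ + 1) + (q - 1) * d :=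
    calc _ = ∑ μ : F, (wt (b + μ • a) - d + d) := by simp [sum_add_distrib, q]
      _ = ∑ μ : F, wt (b + μ • a) := sum_congr rfl fun μ _ => Nat.sub_add_cancel (hd_le μ)
      _ = _ := by rw [sum_wt_add_smul, hbw, haw]
  have hcount := card_le_card_filter_eq_zero_add_sum fun μ : F => wt (b + μ • a) - d
  rw [filter_congr fun μ _ => Nat.sub_eq_zero_iff_le.trans (hd_le μ).ge_iff_eq'] at hcount
  have hq : (q - 1) * d + d = q * d := by
    rw [Nat.sub_one_mul, Nat.sub_add_cancel (Nat.le_mul_of_pos_left d Fintype.card_pos)]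
  have : q * (d₁ + 1) = d₁ * q + q := by ring
  omega

end Field

lemma add_sub_one_div_eq {q d₀ d₁ : ℕ} (hd₀₁ : 1 ≤ d₀) (hd₀₂ : d₀ ≤ q - 1) :
    (d₁ * q + d₀ + q - 1) / q = d₁ + 1 :=
  Nat.div_eq_of_lt_le (by rw [add_mul]; omega) (by rw [add_mul, add_mul]; omega)

theorem stmt9_general {F : Type*} [Field F] [Fintype F] {n d d₀ d₁ : ℕ}
    (C : Submodule F (Fin n → F))
    (hmin : ∀ c ∈ C, c ≠ 0 → d ≤ wt c)
    (hdecomp : d = d₁ * Fintype.card F + d₀)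
    (hd₀₁ : 1 ≤ d₀) (hd₀₂ : d₀ ≤ Fintype.card F - 1)
    (a : Fin n → F) (haC : a ∈ C) (haw : wt a = d)
    (c' : {i : Fin n // a i = 0} → F)
    (hc'mem : ∃ b ∈ C, (fun i : {i : Fin n // a i = 0} => b i) = c')
    (hc'wt : wt c' = (d + Fintype.card F - 1) / Fintype.card F) :
    d₀ ≤ Nat.card {b : Fin n → F //
        b ∈ C ∧ (fun i : {i : Fin n // a i = 0} => b i) = c' ∧ wt b = d} ∧
    ∃ b ∈ C, (fun i : {i : Fin n // a i = 0} => b i) = c' ∧ wt b = d := by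
  classical
  obtain ⟨b, hbC, rfl⟩ := hc'mem
  rw [hdecomp, add_sub_one_div_eq hd₀₁ hd₀₂] at hc'wt
  have ha : a ≠ 0 := by rintro rfl; simp [wt_eq_card_filter] at haw; omega
  have hmemC (μ : F) : b + μ • a ∈ C := C.add_mem hbC (C.smul_mem μ haC)
  have hres (μ : F) :
      (fun i : {i // a i = 0} => (b + μ • a) i) = fun i : {i // a i = 0} => b i := by
    funext i; simp [i.2]
  have hd_le (μ : F) : d ≤ wt (b + μ • a) := by
    refine hmin _ (hmemC μ) fun h => ?_
    rw [← hres μ, h] at hc'wt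
    simp [wt] at hc'wt
  have hgood := le_card_filter_wt_add_smul_eq haw hdecomp hc'wt hd_le
  have hlifts : d₀ ≤ Nat.card {v : Fin n → F //
      v ∈ C ∧ (fun i : {i // a i = 0} => v i) = (fun i : {i // a i = 0} => b i) ∧ wt v = d} := by
    refine hgood.trans ((card_le_card fun μ hμ => ?_).trans
      (card_filter_smul_add_le_natCard (F := F) ha b _))
    rw [mem_filter] at hμ ⊢
    exact ⟨hμ.1, hmemC μ, hres μ, hμ.2⟩
  obtain ⟨⟨v, hv⟩⟩ := (Nat.card_pos_iff.1 (hd₀₁.trans hlifts)).1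
  exact ⟨hlifts, v, hv⟩

theorem stmt9 {F : Type*} [Field F] [Fintype F] {n k d d₀ d₁ : ℕ}
    (C : Submodule F (Fin n → F))
    (hk : Module.finrank F C = k)
    (hn : n = gbound (Fintype.card F) k d)
    (hmin : ∀ c ∈ C, c ≠ 0 → d ≤ wt c)
    (hex : ∃ c ∈ C, c ≠ 0 ∧ wt c = d)
    (hqd : ¬ Fintype.card F ∣ d)
    (hdecomp : d = d₁ * Fintype.card F + d₀)
    (hd₀₁ : 1 ≤ d₀) (hd₀₂ : d₀ ≤ Fintype.card F - 1)
    (a : Fin n → F) (haC : a ∈ C) (haw : wt a = d)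
    (c' : {i : Fin n // a i = 0} → F)
    (hc'mem : ∃ b ∈ C, (fun i : {i : Fin n // a i = 0} => b i) = c')
    (hc'wt : wt c' = (d + Fintype.card F - 1) / Fintype.card F) :
    d₀ ≤ Nat.card {b : Fin n → F //
        b ∈ C ∧ (fun i : {i : Fin n // a i = 0} => b i) = c' ∧ wt b = d} ∧
    ∃ b ∈ C, (fun i : {i : Fin n // a i = 0} => b i) = c' ∧ wt b = d :=
  stmt9_general C hmin hdecomp hd₀₁ hd₀₂ a haC haw c' hc'mem hc'wt
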